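/- arXiv:1907.05094 — 2 statements merged into one kernel-verified Lean document; each statement's English description precedes it below -/
import Mathlib

section
/- Let A, B, C, D be pairwise disjoint finite point sets in R^d with |A| ≤ |B| and |C| ≥ |D|. Then Δ(A∪B∪C∪D) ≤ Δ(A) + 3·Δ(B∪C) + Δ(D) + 4·D(A,B) + 4·D(C,D). -/
open Finset
open scoped Classical

noncomputable def centroid {d : ℕ} (P : Finset (EuclideanSpace ℝ (Fin d))) :
    EuclideanSpace ℝ (Fin d) :=
  (P.card : ℝ)⁻¹ • ∑ p ∈ P, p

noncomputable def Delta {d : ℕ} (P : Finset (EuclideanSpace ℝ (Fin d))) : ℝ :=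
  ∑ p ∈ P, ‖p - centroid P‖ ^ 2

noncomputable def mergeD {d : ℕ} (A B : Finset (EuclideanSpace ℝ (Fin d))) : ℝ :=
  Delta (A ∪ B) - Delta A - Delta B

/-
Measure every point of `A ∪ B ∪ C ∪ D` from `z`, the centroid of `B ∪ C`. By the
parallel axis theorem this costs `Δ(A) + |A|‖μ(A) - z‖²` on `A`, `Δ(B ∪ C)` on `B ∪ C` and
`Δ(D) + |D|‖μ(D) - z‖²` on `D`, and it bounds `Δ(A ∪ B ∪ C ∪ D)` because the centroid minimises
the sum of squared distances. Detouring through `μ(B)`, the bias `|A|‖μ(A) - z‖²` is at most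
`4 D(A,B) + 2|A|‖μ(B) - z‖²`, where `|A| ≤ |B|` lets `D(A,B)` pay for `|A|‖μ(A) - μ(B)‖²`;
symmetrically for `D` and `C`. Finally `|A|‖μ(B) - z‖² + |D|‖μ(C) - z‖² ≤ D(B,C) ≤ Δ(B ∪ C)`.
-/

lemma Finset.sum_union_le_add {ι M : Type*} [DecidableEq ι] [AddCommMonoid M] [PartialOrder M]
    [IsOrderedAddMonoid M] {f : ι → M} (hf : ∀ i, 0 ≤ f i) (s t : Finset ι) :
    ∑ i ∈ s ∪ t, f i ≤ ∑ i ∈ s, f i + ∑ i ∈ t, f i := by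
  rw [← sum_union_inter]
  exact le_add_of_nonneg_right (sum_nonneg fun i _ => hf i)

lemma norm_sub_sq_le_two_mul {E : Type*} [SeminormedAddCommGroup E] (x y z : E) :
    ‖x - z‖ ^ 2 ≤ 2 * (‖x - y‖ ^ 2 + ‖y - z‖ ^ 2) := by
  calc ‖x - z‖ ^ 2 ≤ (‖x - y‖ + ‖y - z‖) ^ 2 := by
        gcongr; exact norm_sub_le_norm_sub_add_norm_sub x y z
    _ ≤ 2 * (‖x - y‖ ^ 2 + ‖y - z‖ ^ 2) := add_sq_le

section

variable {d : ℕ}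

lemma Delta_nonneg (P : Finset (EuclideanSpace ℝ (Fin d))) : 0 ≤ Delta P :=
  sum_nonneg fun _ _ => sq_nonneg _

lemma mergeD_comm (X Y : Finset (EuclideanSpace ℝ (Fin d))) : mergeD X Y = mergeD Y X := by
  rw [mergeD, mergeD, union_comm]
  ring

lemma mergeD_le_Delta_union (X Y : Finset (EuclideanSpace ℝ (Fin d))) :
    mergeD X Y ≤ Delta (X ∪ Y) := by
  rw [mergeD]
  linarith [Delta_nonneg X, Delta_nonneg Y]

lemma sum_sub_centroid (P : Finset (EuclideanSpace ℝ (Fin d))) :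
    ∑ p ∈ P, (p - centroid P) = 0 := by
  rcases P.eq_empty_or_nonempty with rfl | hP
  · simp
  rw [sum_sub_distrib, sum_const, _root_.centroid, ← Nat.cast_smul_eq_nsmul ℝ, smul_smul,
    mul_inv_cancel₀ (Nat.cast_ne_zero.mpr hP.card_ne_zero), one_smul, sub_self]

lemma sum_norm_sub_sq_eq (P : Finset (EuclideanSpace ℝ (Fin d))) (z : EuclideanSpace ℝ (Fin d)) :
    ∑ p ∈ P, ‖p - z‖ ^ 2 = Delta P + P.card * ‖centroid P - z‖ ^ 2 := by
  have hsplit : ∀ p ∈ P, ‖p - z‖ ^ 2 = ‖p - centroid P‖ ^ 2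
      + 2 * inner ℝ (p - centroid P) (centroid P - z) + ‖centroid P - z‖ ^ 2 := fun p _ => by
    rw [← norm_add_sq_real, sub_add_sub_cancel]
  have hcross : ∑ p ∈ P, 2 * inner ℝ (p - centroid P) (centroid P - z) = 0 := by
    rw [← mul_sum, ← sum_inner, sum_sub_centroid, inner_zero_left, mul_zero]
  rw [sum_congr rfl hsplit, sum_add_distrib, sum_add_distrib, hcross, sum_const, nsmul_eq_mul,
    Delta, add_zero]

lemma Delta_le_sum_norm_sub_sq (P : Finset (EuclideanSpace ℝ (Fin d)))
    (z : EuclideanSpace ℝ (Fin d)) : Delta P ≤ ∑ p ∈ P, ‖p - z‖ ^ 2 := by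
  rw [sum_norm_sub_sq_eq]
  exact le_add_of_nonneg_right (by positivity)

lemma mergeD_eq {X Y : Finset (EuclideanSpace ℝ (Fin d))} (h : Disjoint X Y) :
    mergeD X Y = X.card * ‖centroid X - centroid (X ∪ Y)‖ ^ 2
      + Y.card * ‖centroid Y - centroid (X ∪ Y)‖ ^ 2 := by
  rw [mergeD, Delta, sum_union h, sum_norm_sub_sq_eq, sum_norm_sub_sq_eq]
  ring

lemma card_mul_norm_centroid_sub_centroid_le {X Y : Finset (EuclideanSpace ℝ (Fin d))}
    (h : Disjoint X Y) (hcard : X.card ≤ Y.card) :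
    X.card * ‖centroid X - centroid Y‖ ^ 2 ≤ 2 * mergeD X Y := by
  set m := centroid (X ∪ Y)
  have hcard' : (X.card : ℝ) ≤ Y.card := by exact_mod_cast hcard
  calc (X.card : ℝ) * ‖centroid X - centroid Y‖ ^ 2
      ≤ X.card * (2 * (‖centroid X - m‖ ^ 2 + ‖m - centroid Y‖ ^ 2)) := by
        gcongr; exact norm_sub_sq_le_two_mul _ _ _
    _ ≤ 2 * (X.card * ‖centroid X - m‖ ^ 2 + Y.card * ‖centroid Y - m‖ ^ 2) := by
        rw [norm_sub_rev m]
        nlinarith [mul_le_mul_of_nonneg_right hcard' (sq_nonneg ‖centroid Y - m‖)]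
    _ = 2 * mergeD X Y := by rw [mergeD_eq h]

lemma card_mul_norm_centroid_sub_le {X Y : Finset (EuclideanSpace ℝ (Fin d))}
    (h : Disjoint X Y) (hcard : X.card ≤ Y.card) (z : EuclideanSpace ℝ (Fin d)) :
    X.card * ‖centroid X - z‖ ^ 2 ≤ 4 * mergeD X Y + 2 * X.card * ‖centroid Y - z‖ ^ 2 := by
  calc (X.card : ℝ) * ‖centroid X - z‖ ^ 2
      ≤ X.card * (2 * (‖centroid X - centroid Y‖ ^ 2 + ‖centroid Y - z‖ ^ 2)) := by
        gcongr; exact norm_sub_sq_le_two_mul _ _ _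
    _ ≤ 4 * mergeD X Y + 2 * X.card * ‖centroid Y - z‖ ^ 2 := by
        linarith [card_mul_norm_centroid_sub_centroid_le h hcard]

end

theorem delta_union_four_bound_general {d : ℕ} (A B C D : Finset (EuclideanSpace ℝ (Fin d)))
    (hAB : Disjoint A B)
    (hBC : Disjoint B C) (hCD : Disjoint C D)
    (hcardAB : A.card ≤ B.card) (hcardCD : D.card ≤ C.card) :
    Delta (A ∪ B ∪ C ∪ D) ≤
      Delta A + 3 * Delta (B ∪ C) + Delta D + 4 * mergeD A B + 4 * mergeD C D := by
  set z := centroid (B ∪ C)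
  have hmiddle : A.card * ‖centroid B - z‖ ^ 2 + D.card * ‖centroid C - z‖ ^ 2
      ≤ Delta (B ∪ C) :=
    calc (A.card : ℝ) * ‖centroid B - z‖ ^ 2 + D.card * ‖centroid C - z‖ ^ 2
        ≤ B.card * ‖centroid B - z‖ ^ 2 + C.card * ‖centroid C - z‖ ^ 2 := by gcongr
      _ = mergeD B C := (mergeD_eq hBC).symm
      _ ≤ Delta (B ∪ C) := mergeD_le_Delta_union B C
  have hnonneg : ∀ p, 0 ≤ ‖p - z‖ ^ 2 := fun p => sq_nonneg _
  calc Delta (A ∪ B ∪ C ∪ D) ≤ ∑ p ∈ A ∪ (B ∪ C) ∪ D, ‖p - z‖ ^ 2 := by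
        rw [union_assoc A B C]; exact Delta_le_sum_norm_sub_sq _ z
    _ ≤ ∑ p ∈ A, ‖p - z‖ ^ 2 + ∑ p ∈ B ∪ C, ‖p - z‖ ^ 2 + ∑ p ∈ D, ‖p - z‖ ^ 2 :=
        (sum_union_le_add hnonneg _ _).trans (by gcongr; exact sum_union_le_add hnonneg _ _)
    _ = Delta A + A.card * ‖centroid A - z‖ ^ 2 + Delta (B ∪ C)
          + (Delta D + D.card * ‖centroid D - z‖ ^ 2) := by
        rw [sum_norm_sub_sq_eq A, sum_norm_sub_sq_eq D]
        rfl
    _ ≤ Delta A + 3 * Delta (B ∪ C) + Delta D + 4 * mergeD A B + 4 * mergeD C D := by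
        linarith [card_mul_norm_centroid_sub_le hAB hcardAB z,
          card_mul_norm_centroid_sub_le hCD.symm hcardCD z, mergeD_comm D C]

theorem delta_union_four_bound {d : ℕ} (A B C D : Finset (EuclideanSpace ℝ (Fin d)))
    (hAB : Disjoint A B) (hAC : Disjoint A C) (hAD : Disjoint A D)
    (hBC : Disjoint B C) (hBD : Disjoint B D) (hCD : Disjoint C D)
    (hcardAB : A.card ≤ B.card) (hcardCD : D.card ≤ C.card) :
    Delta (A ∪ B ∪ C ∪ D) ≤
      Delta A + 3 * Delta (B ∪ C) + Delta D + 4 * mergeD A B + 4 * mergeD C D :=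
  delta_union_four_bound_general A B C D hAB hBC hCD hcardAB hcardCD
end

section
/- Let A, B, C, D be pairwise disjoint finite point sets in R^d with |A| ≤ |B| and |C| ≥ |D|. Then D(A∪B, C∪D) ≤ 3·Δ(B∪C) + 3·D(A,B) + 3·D(C,D) − Δ(B) − Δ(C). -/
/-! The cost of merging two clusters is `D(X, Y) = |X| |Y| / (|X| + |Y|) * ‖μ X - μ Y‖²`, and
`μ (X ∪ Y)` is the weighted mean of `μ X` and `μ Y`. Hence `μ (A ∪ B) - μ (C ∪ D)` splits as
`|A| / (|A| + |B|) • (μ A - μ B) + (μ B - μ C) + |D| / (|C| + |D|) • (μ C - μ D)`, and a weighted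
Cauchy–Schwarz inequality bounds `D(A ∪ B, C ∪ D)` by `3 (D(A, B) + D(B, C) + D(C, D))`: the
conditions `|A| ≤ |B|` and `|D| ≤ |C|` are what make the weights sum to at most `3`. It remains
to note `3 Δ(B ∪ C) - Δ(B) - Δ(C) = 3 D(B, C) + 2 Δ(B) + 2 Δ(C)`. -/

open Finset
open scoped Classical

theorem norm_sum_sq_le_sum_mul_sum_of_sq_le_mul {ι E : Type*} [SeminormedAddCommGroup E]
    (s : Finset ι) {x : ι → E} {w q : ι → ℝ} (hw : ∀ i ∈ s, 0 ≤ w i) (hq : ∀ i ∈ s, 0 ≤ q i)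
    (h : ∀ i ∈ s, ‖x i‖ ^ 2 ≤ w i * q i) :
    ‖∑ i ∈ s, x i‖ ^ 2 ≤ (∑ i ∈ s, w i) * ∑ i ∈ s, q i :=
  (pow_le_pow_left₀ (norm_nonneg _) (norm_sum_le s x) 2).trans
    (sum_sq_le_sum_mul_sum_of_sq_le_mul s hw hq h)

theorem sum_weights_le_three {a b c e : ℝ} (ha : 0 ≤ a) (hab : a ≤ b) (he : 0 ≤ e) (hec : e ≤ c)
    (hb : 0 < b) (hc : 0 < c) :
    (a + b) * (c + e) / (a + b + (c + e)) *
      (a / (b * (a + b)) + (b + c) / (b * c) + e / (c * (c + e))) ≤ 3 := by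
  have hab' : 0 < a + b := by linarith
  have hce : 0 < c + e := by linarith
  rw [div_mul_eq_mul_div, div_le_iff₀ (by positivity)]
  field_simp
  -- after clearing denominators the slack is `2 ((b - a) c (c + e) + (c - e) b (a + b))`
  nlinarith [mul_nonneg (mul_nonneg (sub_nonneg.2 hab) hc.le) hce.le,
    mul_nonneg (mul_nonneg (sub_nonneg.2 hec) hb.le) hab'.le]

section WeightedPoints

variable {E : Type*} [NormedAddCommGroup E]

noncomputable def mergeCost (m n : ℝ) (u v : E) : ℝ := m * n / (m + n) * ‖u - v‖ ^ 2

theorem mergeCost_nonneg {m n : ℝ} (hm : 0 ≤ m) (hn : 0 ≤ n) (u v : E) :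
    0 ≤ mergeCost m n u v := by
  unfold mergeCost; positivity

variable [InnerProductSpace ℝ E]

noncomputable def weightedMean (m n : ℝ) (u v : E) : E := (m + n)⁻¹ • (m • u + n • v)

theorem mergeCost_eq {m n : ℝ} (hm : 0 ≤ m) (hn : 0 ≤ n) (u v : E) :
    mergeCost m n u v =
      m * ‖u‖ ^ 2 + n * ‖v‖ ^ 2 - (m + n) * ‖weightedMean m n u v‖ ^ 2 := by
  rcases (add_nonneg hm hn).eq_or_lt' with hmn | hmn
  · obtain ⟨rfl, rfl⟩ : m = 0 ∧ n = 0 := ⟨by linarith, by linarith⟩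
    simp [mergeCost, weightedMean]
  · rw [mergeCost, weightedMean, norm_smul, mul_pow, Real.norm_eq_abs, sq_abs,
      norm_add_sq_real, norm_sub_sq_real, real_inner_smul_left, real_inner_smul_right,
      norm_smul, norm_smul, mul_pow, mul_pow, Real.norm_eq_abs, Real.norm_eq_abs, sq_abs, sq_abs]
    field_simp
    ring

theorem weightedMean_sub_weightedMean {a b c e : ℝ} (hab : a + b ≠ 0) (hce : c + e ≠ 0)
    (α β γ δ : E) :
    weightedMean a b α β - weightedMean c e γ δ =
      (a / (a + b)) • (α - β) + (β - γ) + (e / (c + e)) • (γ - δ) := by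
  unfold weightedMean
  match_scalars <;> field_simp <;> ring

theorem mergeCost_weightedMean_le_of_pos {a b c e : ℝ} (ha : 0 ≤ a) (hab : a ≤ b) (he : 0 ≤ e)
    (hec : e ≤ c) (hb : 0 < b) (hc : 0 < c) (α β γ δ : E) :
    mergeCost (a + b) (c + e) (weightedMean a b α β) (weightedMean c e γ δ) ≤
      3 * (mergeCost a b α β + mergeCost b c β γ + mergeCost c e γ δ) := by
  have hab' : 0 < a + b := by linarith
  have hce : 0 < c + e := by linarith
  have hx : ‖(a / (a + b)) • (α - β)‖ ^ 2 = a / (b * (a + b)) * mergeCost a b α β := by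
    rw [mergeCost, norm_smul, mul_pow, Real.norm_eq_abs, sq_abs]
    field_simp
  have hy : ‖β - γ‖ ^ 2 = (b + c) / (b * c) * mergeCost b c β γ := by
    rw [mergeCost]
    field_simp
  have hz : ‖(e / (c + e)) • (γ - δ)‖ ^ 2 = e / (c * (c + e)) * mergeCost c e γ δ := by
    rw [mergeCost, norm_smul, mul_pow, Real.norm_eq_abs, sq_abs]
    field_simp
  have hcauchy := norm_sum_sq_le_sum_mul_sum_of_sq_le_mul univ
    (x := ![(a / (a + b)) • (α - β), β - γ, (e / (c + e)) • (γ - δ)])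
    (w := ![a / (b * (a + b)), (b + c) / (b * c), e / (c * (c + e))])
    (q := ![mergeCost a b α β, mergeCost b c β γ, mergeCost c e γ δ])
    (by intro i _; fin_cases i <;> simp <;> positivity)
    (by intro i _; fin_cases i <;> simp <;> apply mergeCost_nonneg <;> linarith)
    (by intro i _; fin_cases i <;> simp [hx, hy, hz])
  simp only [Fin.sum_univ_three, Matrix.cons_val] at hcauchy
  have hM : 0 ≤ mergeCost a b α β + mergeCost b c β γ + mergeCost c e γ δ := by
    have := mergeCost_nonneg ha hb.le α β
    have := mergeCost_nonneg hb.le hc.le β γ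
    have := mergeCost_nonneg hc.le he γ δ
    positivity
  calc mergeCost (a + b) (c + e) (weightedMean a b α β) (weightedMean c e γ δ)
      = (a + b) * (c + e) / (a + b + (c + e)) *
          ‖(a / (a + b)) • (α - β) + (β - γ) + (e / (c + e)) • (γ - δ)‖ ^ 2 := by
        rw [mergeCost, weightedMean_sub_weightedMean hab'.ne' hce.ne']
    _ ≤ (a + b) * (c + e) / (a + b + (c + e)) *
          ((a / (b * (a + b)) + (b + c) / (b * c) + e / (c * (c + e))) *
            (mergeCost a b α β + mergeCost b c β γ + mergeCost c e γ δ)) := by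
        gcongr
    _ ≤ 3 * (mergeCost a b α β + mergeCost b c β γ + mergeCost c e γ δ) := by
        rw [← mul_assoc]
        exact mul_le_mul_of_nonneg_right (sum_weights_le_three ha hab he hec hb hc) hM

theorem mergeCost_weightedMean_le {a b c e : ℝ} (ha : 0 ≤ a) (hab : a ≤ b) (he : 0 ≤ e)
    (hec : e ≤ c) (α β γ δ : E) :
    mergeCost (a + b) (c + e) (weightedMean a b α β) (weightedMean c e γ δ) ≤
      3 * (mergeCost a b α β + mergeCost b c β γ + mergeCost c e γ δ) := by
  rcases (ha.trans hab).eq_or_lt' with rfl | hb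
  · obtain rfl : a = 0 := le_antisymm hab ha
    have := mergeCost_nonneg le_rfl (he.trans hec) β γ
    have := mergeCost_nonneg (he.trans hec) he γ δ
    simp only [mergeCost, zero_mul, zero_div, add_zero, zero_add] at *
    linarith
  rcases (he.trans hec).eq_or_lt' with rfl | hc
  · obtain rfl : e = 0 := le_antisymm hec he
    have := mergeCost_nonneg ha hb.le α β
    simp only [mergeCost, mul_zero, zero_div, zero_mul, add_zero] at *
    linarith
  exact mergeCost_weightedMean_le_of_pos ha hab he hec hb hc α β γ δ

end WeightedPoints

theorem card_smul_centroid {d : ℕ} (P : Finset (EuclideanSpace ℝ (Fin d))) :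
    (P.card : ℝ) • centroid P = ∑ p ∈ P, p := by
  rcases P.eq_empty_or_nonempty with rfl | hP
  · simp
  · exact smul_inv_smul₀ (by positivity) _

theorem Delta_eq_sum_norm_sq_sub {d : ℕ} (P : Finset (EuclideanSpace ℝ (Fin d))) :
    Delta P = ∑ p ∈ P, ‖p‖ ^ 2 - P.card * ‖centroid P‖ ^ 2 := by
  have hinner : ∑ p ∈ P, inner ℝ p (centroid P) = P.card * ‖centroid P‖ ^ 2 := by
    rw [← sum_inner, ← card_smul_centroid, real_inner_smul_left, real_inner_self_eq_norm_sq]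
  simp only [Delta, norm_sub_sq_real, sum_add_distrib, sum_sub_distrib, ← mul_sum, hinner,
    sum_const, nsmul_eq_mul]
  ring

theorem centroid_union {d : ℕ} {X Y : Finset (EuclideanSpace ℝ (Fin d))} (h : Disjoint X Y) :
    centroid (X ∪ Y) = weightedMean (X.card : ℝ) Y.card (centroid X) (centroid Y) := by
  rw [_root_.centroid, card_union_of_disjoint h, sum_union h, ← card_smul_centroid X,
    ← card_smul_centroid Y, weightedMean, Nat.cast_add]

theorem mergeD_eq_mergeCost {d : ℕ} {X Y : Finset (EuclideanSpace ℝ (Fin d))}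
    (h : Disjoint X Y) :
    mergeD X Y = mergeCost (X.card : ℝ) Y.card (centroid X) (centroid Y) := by
  rw [mergeCost_eq (Nat.cast_nonneg _) (Nat.cast_nonneg _), ← centroid_union h, mergeD,
    Delta_eq_sum_norm_sq_sub, Delta_eq_sum_norm_sq_sub, Delta_eq_sum_norm_sq_sub,
    sum_union h, card_union_of_disjoint h, Nat.cast_add]
  ring

theorem mergeD_union_four_bound {d : ℕ} (A B C D : Finset (EuclideanSpace ℝ (Fin d)))
    (hAB : Disjoint A B) (hAC : Disjoint A C) (hAD : Disjoint A D)
    (hBC : Disjoint B C) (hBD : Disjoint B D) (hCD : Disjoint C D)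
    (hcardAB : A.card ≤ B.card) (hcardCD : D.card ≤ C.card) :
    mergeD (A ∪ B) (C ∪ D) ≤
      3 * Delta (B ∪ C) + 3 * mergeD A B + 3 * mergeD C D - Delta B - Delta C := by
  have hU : Disjoint (A ∪ B) (C ∪ D) :=
    disjoint_union_left.2 ⟨disjoint_union_right.2 ⟨hAC, hAD⟩, disjoint_union_right.2 ⟨hBC, hBD⟩⟩
  have hmerge : mergeD (A ∪ B) (C ∪ D) ≤ 3 * (mergeD A B + mergeD B C + mergeD C D) := by
    rw [mergeD_eq_mergeCost hU, mergeD_eq_mergeCost hAB, mergeD_eq_mergeCost hBC,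
      mergeD_eq_mergeCost hCD, centroid_union hAB, centroid_union hCD,
      card_union_of_disjoint hAB, card_union_of_disjoint hCD, Nat.cast_add, Nat.cast_add]
    exact mergeCost_weightedMean_le (Nat.cast_nonneg _) (by exact_mod_cast hcardAB)
      (Nat.cast_nonneg _) (by exact_mod_cast hcardCD) _ _ _ _
  have hB : 0 ≤ Delta B := sum_nonneg fun _ _ => sq_nonneg _
  have hC : 0 ≤ Delta C := sum_nonneg fun _ _ => sq_nonneg _
  unfold mergeD at hmerge ⊢
  linarith
end
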